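/- If T is a bounded bijective linear operator on a Hilbert space Y and the operator T*A is coercive (i.e. inf over nonzero y of |⟨T*Ay, y⟩|/‖y‖² > 0), then A is bijective with bounded inverse. -/

import Mathlib

/-! Coercivity makes `T† A` bounded below, hence injective with closed range, and a vector
orthogonal to its range is killed by the coercivity estimate; so `T† A` is invertible (complex
Lax–Milgram). As `T` is invertible, so is `T† = star T`, hence so is `A = (T†)⁻¹ (T† A)`. -/

open scoped InnerProductSpace

namespace ContinuousLinearMap

variable {𝕜 E : Type*} [RCLike 𝕜] [NormedAddCommGroup E] [InnerProductSpace 𝕜 E] [CompleteSpace E]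

theorem isUnit_adjoint_comp_iff {T : E →L[𝕜] E} (hT : IsUnit T) (A : E →L[𝕜] E) :
    IsUnit (adjoint T ∘L A) ↔ IsUnit A := by
  rw [← star_eq_adjoint, ← mul_def]
  exact hT.star.mul_left_iff

end ContinuousLinearMap

theorem bijective_of_adjoint_comp_coercive
    {Y : Type*} [NormedAddCommGroup Y] [InnerProductSpace ℂ Y] [CompleteSpace Y]
    (A T : Y →L[ℂ] Y) (hT : Function.Bijective T)
    (hcoer : ∃ c : ℝ, 0 < c ∧ ∀ y : Y,
      c * ‖y‖ ^ 2 ≤ ‖(⟪((ContinuousLinearMap.adjoint T).comp A) y, y⟫_ℂ : ℂ)‖) :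
    Function.Bijective A ∧
      ∃ B : Y →L[ℂ] Y, B.comp A = ContinuousLinearMap.id ℂ Y ∧
        A.comp B = ContinuousLinearMap.id ℂ Y := by
  obtain ⟨c, hc, hcoer⟩ := hcoer
  have hS : IsUnit (ContinuousLinearMap.adjoint T ∘L A) :=
    ContinuousLinearMap.isUnit_of_forall_le_norm_inner_map _ (c := ⟨c, hc.le⟩) hc
      fun y ↦ (mul_comm _ _).le.trans (hcoer y)
  have hA : IsUnit A :=
    (ContinuousLinearMap.isUnit_adjoint_comp_iff
      (ContinuousLinearMap.isUnit_iff_bijective.mpr hT) A).mp hS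
  exact ⟨ContinuousLinearMap.isUnit_iff_bijective.mp hA,
    ↑hA.unit⁻¹, hA.val_inv_mul, hA.mul_val_inv⟩
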